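/- There exists an absolute constant c > 0 with the following property. Let p be a prime, ζ, ε ∈ (0,1], A, B, C ⊆ F_p sets with |A|, |B|, |C| > ζ·√p, and χ a nontrivial multiplicative character modulo p. If |∑_{a∈A, b∈B, c∈C} χ(a+b+c)| ≥ ε·|A|·|B|·|C|, then the additive energy satisfies E⁺(B, C) ≥ c·(ε·ζ)²·(|B|·|C|)^(3/2). -/

import Mathlib

/-!
Grouping the sum by `s = b + c` writes it as `∑ₛ r(s) T(s)`, where `r(s)` counts the
representations `s = b + c` and `T(s) = ∑_{a ∈ A} χ(a + s)`. Cauchy–Schwarz bounds its square by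
`E⁺(B, C) · ∑ₛ |T(s)|²`, and the orthogonality relation `∑ₓ χ(a + x) χ̄(a' + x) = p [a = a'] - 1`
gives `∑ₛ |T(s)|² = |A| (p - |A|) ≤ |A| p`. Hence `E⁺(B, C) ≥ ε² |A| (|B| |C|)² / p`, and
`|A| √(|B| |C|) > ζ² p` turns this into the claim with `c = 1`.
-/

open Finset

section Energy

variable {G : Type*} [AddCommMonoid G] [Fintype G] [DecidableEq G]

lemma sum_sum_add_eq_sum_card_smul {M : Type*} [AddCommMonoid M] (B C : Finset G) (f : G → M) :
    ∑ b ∈ B, ∑ c ∈ C, f (b + c) = ∑ x, #{q ∈ B ×ˢ C | q.1 + q.2 = x} • f x := by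
  simp_rw [← sum_product' B C fun b c ↦ f (b + c),
    ← sum_fiberwise' (B ×ˢ C) (fun q ↦ q.1 + q.2) f, sum_const]

lemma norm_sum_sum_add_sq_le_addEnergy_mul {E : Type*} [SeminormedAddCommGroup E] (B C : Finset G)
    (f : G → E) :
    ‖∑ b ∈ B, ∑ c ∈ C, f (b + c)‖ ^ 2 ≤ addEnergy B C * ∑ x, ‖f x‖ ^ 2 := by
  set r : G → ℕ := fun x ↦ #{q ∈ B ×ˢ C | q.1 + q.2 = x}
  have htriangle : ‖∑ b ∈ B, ∑ c ∈ C, f (b + c)‖ ≤ ∑ x, (r x : ℝ) * ‖f x‖ := by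
    rw [sum_sum_add_eq_sum_card_smul]
    exact (norm_sum_le _ _).trans (sum_le_sum fun x _ ↦ norm_nsmul_le)
  calc ‖∑ b ∈ B, ∑ c ∈ C, f (b + c)‖ ^ 2
      ≤ (∑ x, (r x : ℝ) * ‖f x‖) ^ 2 := by gcongr
    _ ≤ (∑ x, (r x : ℝ) ^ 2) * ∑ x, ‖f x‖ ^ 2 := sum_mul_sq_le_sq_mul_sq _ _ _
    _ = addEnergy B C * ∑ x, ‖f x‖ ^ 2 := by rw [addEnergy_eq_sum_sq]; push_cast; rfl

end Energy

namespace MulChar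

variable {F R : Type*} [Field F] [Fintype F] [DecidableEq F] [CommRing R]

lemma sum_apply_mul_inv_apply (χ : MulChar F R) :
    ∑ x, χ x * χ⁻¹ x = Fintype.card F - 1 := by
  simp_rw [← mul_apply, mul_inv_cancel, sum_one_eq_card_units, Fintype.card_units,
    Nat.cast_sub Fintype.card_pos, Nat.cast_one]

lemma sum_apply_add_mul_inv_apply [IsDomain R] {χ : MulChar F R} (hχ : χ ≠ 1) {d : F}
    (hd : d ≠ 0) :
    ∑ y, χ (d + y) * χ⁻¹ y = -1 := by
  have hterm : ∀ y, χ (d + y) * χ⁻¹ y = χ (d * y⁻¹ + 1) - if y = 0 then 1 else 0 := by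
    intro y
    rcases eq_or_ne y 0 with rfl | hy
    · simp
    · rw [inv_apply', ← map_mul, if_neg hy, sub_zero, add_mul, mul_inv_cancel₀ hy]
  have hbij : Function.Bijective fun y : F ↦ d * y⁻¹ :=
    ((Equiv.inv F).trans (Equiv.mulLeft₀ d hd)).bijective
  rw [sum_congr rfl fun y _ ↦ hterm y, sum_sub_distrib, sum_ite_eq' univ (0 : F),
    if_pos (mem_univ _), hbij.sum_comp (fun z ↦ χ (z + 1)),
    Fintype.sum_equiv (Equiv.addRight 1) (fun z ↦ χ (z + 1)) χ fun _ ↦ rfl,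
    sum_eq_zero_of_ne_one hχ, zero_sub]

lemma sum_apply_add_mul_inv_apply_add [IsDomain R] {χ : MulChar F R} (hχ : χ ≠ 1) (a a' : F) :
    ∑ x, χ (a + x) * χ⁻¹ (a' + x) = (if a = a' then (Fintype.card F : R) else 0) - 1 := by
  rw [Fintype.sum_equiv (Equiv.addLeft a') _ (fun y ↦ χ (a - a' + y) * χ⁻¹ y)
    fun x ↦ by rw [Equiv.coe_addLeft, ← add_assoc, sub_add_cancel]]
  split_ifs with h
  · rw [h, sub_self]
    simp only [zero_add, sum_apply_mul_inv_apply]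
  · rw [sum_apply_add_mul_inv_apply hχ (sub_ne_zero.mpr h), zero_sub]

lemma sum_norm_sum_apply_add_sq {χ : MulChar F ℂ} (hχ : χ ≠ 1) (A : Finset F) :
    ∑ x, ‖∑ a ∈ A, χ (a + x)‖ ^ 2 = #A * (Fintype.card F - #A) := by
  have hdiag : ∀ a ∈ A, ∑ a' ∈ A, ((if a = a' then (Fintype.card F : ℂ) else 0) - 1) =
      Fintype.card F - #A := by
    intro a ha
    rw [sum_sub_distrib, sum_ite_eq A a, if_pos ha, sum_const, nsmul_one]
  apply Complex.ofReal_injective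
  push_cast
  simp_rw [← Complex.mul_conj', map_sum, ← RCLike.star_def, star_apply', sum_mul_sum]
  rw [sum_comm]
  simp_rw [sum_comm (s := univ), sum_apply_add_mul_inv_apply_add hχ]
  rw [sum_congr rfl hdiag, sum_const, nsmul_eq_mul]

end MulChar

lemma sq_mul_rpow_three_halves_le {p ζ ε a b c E : ℝ} (hp : 0 < p) (hζ : 0 ≤ ζ)
    (ha : ζ * √p < a) (hb : ζ * √p < b) (hc : ζ * √p < c)
    (h : (ε * a * b * c) ^ 2 ≤ E * (a * p)) :
    (ε * ζ) ^ 2 * (b * c) ^ (3 / 2 : ℝ) ≤ E := by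
  have hζp : 0 ≤ ζ * √p := by positivity
  have ha0 : 0 < a := hζp.trans_lt ha
  have hbc : (ζ * √p) ^ 2 < b * c := by rw [sq]; exact mul_lt_mul'' hb hc hζp hζp
  have hsqrt : ζ * √p < √(b * c) := by
    simpa [Real.sqrt_sq hζp] using Real.sqrt_lt_sqrt (sq_nonneg _) hbc
  have hbc0 : 0 < b * c := (sq_nonneg _).trans_lt hbc
  have hrpow : (b * c) ^ (3 / 2 : ℝ) = b * c * √(b * c) := by
    rw [show (3 / 2 : ℝ) = 1 + 1 / 2 by norm_num, Real.rpow_add hbc0, Real.rpow_one,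
      ← Real.sqrt_eq_rpow]
  have hζ2p : ζ ^ 2 * p ≤ a * √(b * c) := by
    calc ζ ^ 2 * p = (ζ * √p) * (ζ * √p) := by
          rw [← mul_mul_mul_comm, Real.mul_self_sqrt hp.le, sq]
      _ ≤ a * √(b * c) := mul_le_mul ha.le hsqrt.le hζp ha0.le
  rw [← mul_le_mul_iff_of_pos_right hp, hrpow]
  have hE : ε ^ 2 * a * (b * c) ^ 2 ≤ E * p := by
    rw [← mul_le_mul_iff_of_pos_right ha0]
    linarith
  calc (ε * ζ) ^ 2 * (b * c * √(b * c)) * p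
        = ε ^ 2 * (b * c) * √(b * c) * (ζ ^ 2 * p) := by ring
    _ ≤ ε ^ 2 * (b * c) * √(b * c) * (a * √(b * c)) := by gcongr
    _ = ε ^ 2 * a * (b * c) ^ 2 := by
      linear_combination ε ^ 2 * a * (b * c) * Real.mul_self_sqrt hbc0.le
    _ ≤ E * p := hE

/-- A large ternary character sum forces large additive energy `E⁺(B, C)`. -/
theorem stmt_13 :
    ∃ c : ℝ, 0 < c ∧
      ∀ (p : ℕ), p.Prime →
        ∀ (ζ ε : ℝ), ζ ∈ Set.Ioc (0 : ℝ) 1 → ε ∈ Set.Ioc (0 : ℝ) 1 →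
          ∀ A B C : Finset (ZMod p),
            (A.card : ℝ) > ζ * Real.sqrt p →
            (B.card : ℝ) > ζ * Real.sqrt p →
            (C.card : ℝ) > ζ * Real.sqrt p →
            ∀ χ : MulChar (ZMod p) ℂ, χ ≠ 1 →
              ‖∑ a ∈ A, ∑ b ∈ B, ∑ c' ∈ C, χ (a + b + c')‖ ≥
                ε * A.card * B.card * C.card →
              ((((B ×ˢ B) ×ˢ (C ×ˢ C)).filter
                  (fun x => x.1.1 + x.2.1 = x.1.2 + x.2.2)).card : ℝ) ≥
                c * (ε * ζ) ^ 2 * ((B.card : ℝ) * C.card) ^ ((3 : ℝ) / 2) := by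
  refine ⟨1, one_pos, fun p hp ζ ε hζ hε A B C hA hB hC χ hχ hS => ?_⟩
  have : Fact p.Prime := ⟨hp⟩
  have hregroup : ∑ a ∈ A, ∑ b ∈ B, ∑ c ∈ C, χ (a + b + c) =
      ∑ b ∈ B, ∑ c ∈ C, ∑ a ∈ A, χ (a + (b + c)) := by
    simp_rw [← add_assoc]
    exact sum_comm.trans (sum_congr rfl fun _ _ ↦ sum_comm)
  have hCS := norm_sum_sum_add_sq_le_addEnergy_mul B C fun x ↦ ∑ a ∈ A, χ (a + x)
  rw [← hregroup, MulChar.sum_norm_sum_apply_add_sq hχ A, ZMod.card] at hCS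
  have hsq : (ε * #A * #B * #C) ^ 2 ≤ (addEnergy B C : ℝ) * (#A * p) :=
    calc (ε * #A * #B * #C) ^ 2 ≤ ‖∑ a ∈ A, ∑ b ∈ B, ∑ c ∈ C, χ (a + b + c)‖ ^ 2 := by
          have hε0 := hε.1.le
          gcongr
      _ ≤ (addEnergy B C : ℝ) * (#A * (p - #A)) := hCS
      _ ≤ (addEnergy B C : ℝ) * (#A * p) := by gcongr; exact sub_le_self _ (Nat.cast_nonneg' _)
  rw [one_mul]
  exact sq_mul_rpow_three_halves_le (by exact_mod_cast hp.pos) hζ.1.le hA hB hC hsq
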